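/- arXiv:2202.09757 — 5 statements merged into one kernel-verified Lean document; each statement's English description precedes it below -/
import Mathlib

section
/- Let G be a group and θ an automorphism of G such that for every z ∈ G there exists a natural number n_z ≥ 1 with θ^{n_z}(z) = z. Suppose x, y ∈ G are fixed by θ and lie in the same θ-twisted conjugacy class. Then there exists a natural number r ≥ 1 such that x^r and y^r are conjugate in G. -/
theorem pow_conj_of_twisted_conj_fixed {G : Type*} [Group G] (θ : MulAut G)
    (hloc : ∀ z : G, ∃ n : ℕ, 1 ≤ n ∧ (θ ^ n) z = z)
    (x y : G) (hx : θ x = x) (hy : θ y = y)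
    (hxy : ∃ g : G, y = g * x * (θ g)⁻¹) :
    ∃ r : ℕ, 1 ≤ r ∧ ∃ h : G, x ^ r = h * (y ^ r) * h⁻¹ := by
  obtain ⟨g, hg⟩ := hxy
  obtain ⟨n, hn1, hn⟩ := hloc g
  have hxk : ∀ k : ℕ, (θ ^ k) x = x := by
    intro k; induction k with
    | zero => rfl
    | succ k ih => rw [pow_succ, MulAut.mul_apply, hx, ih]
  have hyk : ∀ k : ℕ, (θ ^ k) y = y := by
    intro k; induction k with
    | zero => rfl
    | succ k ih => rw [pow_succ, MulAut.mul_apply, hy, ih]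
  have key : ∀ k : ℕ, y ^ k = g * x ^ k * ((θ ^ k) g)⁻¹ := by
    intro k; induction k with
    | zero => simp
    | succ k ih =>
      have h1 : y = (θ ^ k) g * x * ((θ ^ (k + 1)) g)⁻¹ := by
        have := congrArg (θ ^ k) hg
        simpa [map_mul, map_inv, hxk k, hyk k, pow_succ, MulAut.mul_apply] using this
      calc y ^ (k + 1) = y ^ k * y := pow_succ y k
        _ = g * x ^ k * ((θ ^ k) g)⁻¹ * ((θ ^ k) g * x * ((θ ^ (k + 1)) g)⁻¹) := by
            rw [ih, ← h1]
        _ = g * x ^ (k + 1) * ((θ ^ (k + 1)) g)⁻¹ := by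
            rw [pow_succ]; group
  refine ⟨n, hn1, g⁻¹, ?_⟩
  have := key n
  rw [hn] at this
  rw [this]; group
end

section
/- Let θ be an automorphism of a group G of finite order r. If x, y ∈ G are fixed by θ and x = g·y·θ(g)⁻¹ for some g ∈ G, then x^r and y^r are conjugate in G. -/
theorem pow_conj_of_twisted_conj_finite_order {G : Type*} [Group G] (θ : MulAut G)
    (r : ℕ) (hr : 1 ≤ r) (hord : θ ^ r = 1)
    (x y : G) (hx : θ x = x) (hy : θ y = y)
    (g : G) (hxy : x = g * y * (θ g)⁻¹) :
    ∃ h : G, x ^ r = h * (y ^ r) * h⁻¹ := by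
  have key : ∀ k : ℕ, x ^ k = g * y ^ k * ((θ ^ k) g)⁻¹ := by
    intro k
    induction k with
    | zero => simp
    | succ k ih =>
      have hθ : x ^ k = θ g * y ^ k * ((θ ^ (k + 1)) g)⁻¹ := by
        have := congrArg θ ih
        simpa [map_pow, hx, hy, pow_succ', MulAut.mul_apply] using this
      calc x ^ (k + 1) = x * x ^ k := by rw [pow_succ']
        _ = (g * y * (θ g)⁻¹) * (θ g * y ^ k * ((θ ^ (k + 1)) g)⁻¹) := by
            rw [← hxy, ← hθ]
        _ = g * y ^ (k + 1) * ((θ ^ (k + 1)) g)⁻¹ := by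
            rw [pow_succ']; group
  refine ⟨g, ?_⟩
  simpa [hord] using key r
end

section
/- Let 1 → K → G → H → 1 be exact with K a finite normal subgroup of G, and let φ be an automorphism of G with φ(K) = K, inducing φ̄ on H = G/K. If R(φ) = ∞ then R(φ̄) = ∞. -/
/-- The φ-twisted conjugacy relation. -/
def twistedRel {G : Type*} [Group G] (φ : G ≃* G) (x y : G) : Prop :=
  ∃ g : G, y = g * x * (φ g)⁻¹

lemma twistedRel_equivalence {G : Type*} [Group G] (φ : G ≃* G) :
    Equivalence (twistedRel φ) := by
  constructor
  · intro x; exact ⟨1, by simp⟩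
  · rintro x y ⟨g, rfl⟩
    exact ⟨g⁻¹, by simp [mul_assoc]⟩
  · rintro x y z ⟨g, rfl⟩ ⟨g', rfl⟩
    refine ⟨g' * g, ?_⟩
    simp [mul_assoc]

theorem reidemeister_quotient_infinite_of_finite_kernel {G : Type*} [Group G]
    (K : Subgroup G) [K.Normal] [Finite K]
    (φ : G ≃* G) (hK : ∀ g : G, g ∈ K ↔ φ g ∈ K)
    (ψ : (G ⧸ K) ≃* (G ⧸ K))
    (hψ : ∀ g : G, ψ (QuotientGroup.mk g) = QuotientGroup.mk (φ g))
    (h : Infinite (Quot (twistedRel φ))) :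
    Infinite (Quot (twistedRel ψ)) := by
  by_contra hfin
  rw [not_infinite_iff_finite] at hfin
  -- the surjection from (Quot ψ) × K onto Quot φ
  classical
  set f : Quot (twistedRel ψ) × K → Quot (twistedRel φ) :=
    fun p => Quot.mk _ ((Quot.out p.1).out * (p.2 : G)) with hf
  have hsurj : Function.Surjective f := by
    intro q
    induction q using Quot.ind with
    | _ y =>
      set c : Quot (twistedRel ψ) := Quot.mk _ (QuotientGroup.mk (s := K) y) with hc
      set x : G := (Quot.out c).out with hx
      have hxc : QuotientGroup.mk (s := K) x = Quot.out c := Quotient.out_eq _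
      have hcc : Quot.mk (twistedRel ψ) (QuotientGroup.mk (s := K) x) = c := by
        rw [hxc]; exact Quot.out_eq c
      have hrel : twistedRel ψ (QuotientGroup.mk (s := K) x) (QuotientGroup.mk y) := by
        have := hcc.trans hc
        rw [Quot.eq] at this
        exact (Equivalence.eqvGen_iff (twistedRel_equivalence ψ)).mp this
      obtain ⟨gb, hgb⟩ := hrel
      obtain ⟨g, rfl⟩ := QuotientGroup.mk_surjective gb
      have hmem : (g * x * (φ g)⁻¹)⁻¹ * y ∈ K := by
        rw [← QuotientGroup.eq]
        rw [hψ] at hgb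
        rw [hgb]
        simp [QuotientGroup.mk_mul]
      set k0 : G := (g * x * (φ g)⁻¹)⁻¹ * y with hk0
      have hy : y = g * x * (φ g)⁻¹ * k0 := by
        rw [hk0]; group
      set k' : G := (φ g)⁻¹ * k0 * φ g with hk'
      have hk'mem : k' ∈ K := by
        have := Subgroup.Normal.conj_mem ‹K.Normal› k0 hmem (φ g)⁻¹
        simpa [hk'] using this
      refine ⟨⟨c, ⟨k', hk'mem⟩⟩, ?_⟩
      simp only [hf]
      apply Quot.sound
      refine ⟨g, ?_⟩
      rw [hy, ← hx, hk']
      group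
  haveI : Finite (Quot (twistedRel ψ) × K) := inferInstance
  haveI : Finite (Quot (twistedRel φ)) := Finite.of_surjective f hsurj
  exact h.not_finite this
end

section
/- Let p be a prime and let x be the 2×2 matrix [[1−u², u], [−u, 1]] over the polynomial ring F_p[u]. Then for every r ≥ 1, the trace of x^r is a polynomial in u of degree 2r with leading coefficient (−1)^r. -/
open Polynomial

lemma trace_aux {K : Type*} [Field K] {T f g : K[X]} {m : ℕ} {c : K}
    (hT : T.natDegree = 2) (hTl : T.leadingCoeff = -1)
    (hf : f.natDegree = m) (hfl : f.leadingCoeff = c) (hc : c ≠ 0)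
    (hg : g.natDegree < m + 2) :
    (T * f - g).natDegree = m + 2 ∧ (T * f - g).leadingCoeff = -c := by
  have hfne : f ≠ 0 := by
    intro h; rw [h, leadingCoeff_zero] at hfl; exact hc hfl.symm
  have hTne : T ≠ 0 := by
    intro h; rw [h, leadingCoeff_zero] at hTl
    exact one_ne_zero (neg_eq_zero.mp hTl.symm)
  have hmul : (T * f).natDegree = m + 2 := by
    rw [natDegree_mul hTne hfne, hT, hf]; ring
  have hmull : (T * f).leadingCoeff = -c := by
    rw [leadingCoeff_mul, hTl, hfl]; ring
  have hlt : g.natDegree < (T * f).natDegree := hmul ▸ hg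
  constructor
  · rw [natDegree_sub_eq_left_of_natDegree_lt hlt, hmul]
  · rw [leadingCoeff_sub_of_degree_lt (degree_lt_degree hlt), hmull]

theorem trace_pow_degree (p : ℕ) (hp : p.Prime) (r : ℕ) (hr : 1 ≤ r) :
    (Matrix.trace ((!![1 - X ^ 2, X; -X, 1] : Matrix (Fin 2) (Fin 2) (Polynomial (ZMod p))) ^ r)).natDegree = 2 * r ∧
    (Matrix.trace ((!![1 - X ^ 2, X; -X, 1] : Matrix (Fin 2) (Fin 2) (Polynomial (ZMod p))) ^ r)).leadingCoeff = (-1) ^ r := by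
  haveI := Fact.mk hp
  set K := ZMod p
  set x : Matrix (Fin 2) (Fin 2) K[X] := !![1 - X ^ 2, X; -X, 1] with hx
  have hT : Matrix.trace x = 2 - X ^ 2 := by
    simp [hx, Matrix.trace_fin_two]; ring
  have hTdeg : (2 - X ^ 2 : K[X]).natDegree = 2 := by
    compute_degree!
  have hTlc : (2 - X ^ 2 : K[X]).leadingCoeff = -1 := by
    rw [leadingCoeff, hTdeg]
    simp
  have hx2 : x ^ 2 = (2 - X ^ 2 : K[X]) • x - 1 := by
    rw [pow_two, hx, Matrix.mul_fin_two, Matrix.one_fin_two, Matrix.smul_of]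
    refine Matrix.ext fun i j => ?_
    fin_cases i <;> fin_cases j <;> simp <;> ring
  have hrec : ∀ n : ℕ, Matrix.trace (x ^ (n + 2)) =
      (2 - X ^ 2 : K[X]) * Matrix.trace (x ^ (n + 1)) - Matrix.trace (x ^ n) := by
    intro n
    have h : x ^ (n + 2) = (2 - X ^ 2 : K[X]) • x ^ (n + 1) - x ^ n := by
      have : x ^ (n + 2) = x ^ n * x ^ 2 := by rw [← pow_add]
      rw [this, hx2, Matrix.mul_sub, Matrix.mul_smul, mul_one, ← pow_succ]
    rw [h, Matrix.trace_sub, Matrix.trace_smul, smul_eq_mul]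
  have h1 : (Matrix.trace (x ^ 1)).natDegree = 2 ∧
      (Matrix.trace (x ^ 1)).leadingCoeff = -1 := by
    rw [pow_one, hT]
    exact ⟨hTdeg, hTlc⟩
  have main : ∀ n : ℕ, (Matrix.trace (x ^ (n + 1))).natDegree = 2 * (n + 1) ∧
      (Matrix.trace (x ^ (n + 1))).leadingCoeff = (-1) ^ (n + 1) := by
    intro n
    induction n using Nat.twoStepInduction with
    | zero => simpa using h1
    | one =>
        have h0 : (Matrix.trace (x ^ 0)).natDegree < 2 + 2 := by
          rw [pow_zero, Matrix.trace_one]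
          simp
        have := trace_aux hTdeg hTlc h1.1 h1.2 (by norm_num : (-1 : K) ≠ 0) h0
        rw [hrec 0] at *
        refine ⟨?_, ?_⟩
        · rw [this.1]
        · rw [this.2]; norm_num
    | more n ih1 ih2 =>
        have hg : (Matrix.trace (x ^ (n + 1))).natDegree < 2 * (n + 2) + 2 := by
          rw [ih1.1]; omega
        have hc : ((-1 : K) ^ (n + 2)) ≠ 0 := by
          apply pow_ne_zero; norm_num
        have := trace_aux hTdeg hTlc ih2.1 ih2.2 hc hg
        rw [hrec (n + 1)]
        refine ⟨?_, ?_⟩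
        · rw [this.1]; ring
        · rw [this.2]; ring
  obtain ⟨n, rfl⟩ : ∃ n, r = n + 1 := ⟨r - 1, by omega⟩
  exact main n
end

section
/- Let p be a prime and x = [[1−u², u], [−u, 1]] over F_p[u]. For any fixed r ≥ 1 and any m ≠ n (positive integers), the polynomial tr((x|_{u:=s^m})^r) and tr((x|_{u:=s^n})^r) in s have different degrees, namely 2rm and 2rn; in particular tr(x_m^r) ≠ λ·tr(x_n^r) for any nonzero scalar λ ∈ F_p when m ≠ n, where x_m denotes x with u replaced by s^m for an indeterminate s. -/
open Polynomial

/-- The matrix `x_m = [[1 - s^{2m}, s^m], [-s^m, 1]]` over `F_p[s]`. -/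
noncomputable def xm (p m : ℕ) : Matrix (Fin 2) (Fin 2) (Polynomial (ZMod p)) :=
  !![1 - X ^ (2 * m), X ^ m; -(X ^ m), 1]

lemma C_two_eq (p : ℕ) : (C 2 : Polynomial (ZMod p)) = 2 := by
  rw [show (2:ZMod p) = 1 + 1 by norm_num, map_add, map_one]; norm_num

lemma xm_sq (p m : ℕ) :
    xm p m ^ 2 = (2 - X ^ (2 * m) : Polynomial (ZMod p)) • xm p m - 1 := by
  apply Matrix.ext
  intro i j
  fin_cases i <;> fin_cases j <;>
    simp [xm, pow_two, Matrix.mul_apply, Fin.sum_univ_two, two_mul, Matrix.one_apply] <;> ring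

lemma trace_xm (p m : ℕ) :
    Matrix.trace (xm p m) = (2 - X ^ (2 * m) : Polynomial (ZMod p)) := by
  simp [xm, Matrix.trace_fin_two]
  ring

lemma t_eq (p m : ℕ) : (2 - X ^ (2 * m) : Polynomial (ZMod p)) = -(X ^ (2 * m) - C 2) := by
  rw [neg_sub, C_two_eq]

lemma t_natDegree (p m : ℕ) [Fact p.Prime] :
    (2 - X ^ (2 * m) : Polynomial (ZMod p)).natDegree = 2 * m := by
  rw [t_eq, natDegree_neg, natDegree_X_pow_sub_C]

lemma t_leadingCoeff (p m : ℕ) [Fact p.Prime] (hm : 1 ≤ m) :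
    (2 - X ^ (2 * m) : Polynomial (ZMod p)).leadingCoeff = -1 := by
  rw [t_eq, leadingCoeff_neg, (monic_X_pow_sub_C (2 : ZMod p) (by omega)).leadingCoeff]

lemma trace_rec (p m : ℕ) (r : ℕ) :
    Matrix.trace (xm p m ^ (r + 2)) =
      (2 - X ^ (2 * m) : Polynomial (ZMod p)) * Matrix.trace (xm p m ^ (r + 1)) -
        Matrix.trace (xm p m ^ r) := by
  have h : xm p m ^ (r + 2) =
      (2 - X ^ (2 * m) : Polynomial (ZMod p)) • xm p m ^ (r + 1) - xm p m ^ r := by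
    calc xm p m ^ (r + 2) = xm p m ^ 2 * xm p m ^ r := by rw [← pow_add, add_comm]
    _ = ((2 - X ^ (2 * m) : Polynomial (ZMod p)) • xm p m - 1) * xm p m ^ r := by
        rw [xm_sq]
    _ = (2 - X ^ (2 * m) : Polynomial (ZMod p)) • (xm p m * xm p m ^ r) - xm p m ^ r := by
        rw [sub_mul, smul_mul_assoc, one_mul]
    _ = _ := by rw [← pow_succ']
  rw [h, Matrix.trace_sub, Matrix.trace_smul, smul_eq_mul]

lemma key (p m : ℕ) [Fact p.Prime] (hm : 1 ≤ m) : ∀ r, 1 ≤ r →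
    (Matrix.trace (xm p m ^ r)).natDegree = 2 * r * m ∧
    (Matrix.trace (xm p m ^ r)).leadingCoeff = (-1 : ZMod p) ^ r := by
  have ht0 : (2 - X ^ (2 * m) : Polynomial (ZMod p)) ≠ 0 := by
    intro h; have := t_leadingCoeff p m hm; rw [h] at this; simp at this
  have hbase1 : (Matrix.trace (xm p m ^ 1)).natDegree = 2 * 1 * m ∧
      (Matrix.trace (xm p m ^ 1)).leadingCoeff = (-1 : ZMod p) ^ 1 := by
    rw [pow_one, trace_xm]
    exact ⟨by rw [t_natDegree p m], by rw [t_leadingCoeff p m hm, pow_one]⟩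
  have hbase2 : (Matrix.trace (xm p m ^ 2)).natDegree = 2 * 2 * m ∧
      (Matrix.trace (xm p m ^ 2)).leadingCoeff = (-1 : ZMod p) ^ 2 := by
    have h2 : Matrix.trace (xm p m ^ 2) =
        (2 - X ^ (2 * m) : Polynomial (ZMod p)) * (2 - X ^ (2 * m)) - C 2 := by
      rw [xm_sq, Matrix.trace_sub, Matrix.trace_smul, smul_eq_mul, trace_xm,
        Matrix.trace_one, C_two_eq]
      norm_num
    have hmul : ((2 - X ^ (2 * m) : Polynomial (ZMod p)) * (2 - X ^ (2 * m))).natDegree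
        = 2 * m + 2 * m := by rw [natDegree_mul ht0 ht0, t_natDegree p m]
    have hdlt : (C (2 : ZMod p)).degree <
        ((2 - X ^ (2 * m) : Polynomial (ZMod p)) * (2 - X ^ (2 * m))).degree := by
      apply lt_of_le_of_lt (degree_C_le)
      rw [degree_eq_natDegree (mul_ne_zero ht0 ht0), hmul]
      exact_mod_cast (by omega : 0 < 2 * m + 2 * m)
    constructor
    · rw [h2, natDegree_sub_eq_left_of_natDegree_lt, hmul]; · ring
      rw [hmul, natDegree_C]; omega
    · rw [h2, leadingCoeff_sub_of_degree_lt hdlt, leadingCoeff_mul,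
        t_leadingCoeff p m hm]; ring
  intro r
  induction r using Nat.strong_induction_on with
  | _ r ih =>
    intro hr
    match r, hr with
    | 1, _ => exact hbase1
    | 2, _ => exact hbase2
    | (k + 3), _ =>
      have h1 := ih (k + 2) (by omega) (by omega)
      have h0 := ih (k + 1) (by omega) (by omega)
      have h1ne : Matrix.trace (xm p m ^ (k + 2)) ≠ 0 := by
        intro h; rw [h] at h1; simp at h1
        exact (show ((-1 : ZMod p)) ^ (k+2) ≠ 0 from pow_ne_zero _ (by norm_num)) h1.2.symm
      have hmul : ((2 - X ^ (2 * m) : Polynomial (ZMod p)) *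
          Matrix.trace (xm p m ^ (k + 2))).natDegree = 2 * (k + 3) * m := by
        rw [natDegree_mul ht0 h1ne, t_natDegree p m, h1.1]; ring
      have hlt : 2 * (k + 1) * m < 2 * (k + 3) * m :=
        (Nat.mul_lt_mul_right (by omega)).mpr (by omega)
      have hdlt : (Matrix.trace (xm p m ^ (k + 1))).degree <
          ((2 - X ^ (2 * m) : Polynomial (ZMod p)) *
            Matrix.trace (xm p m ^ (k + 2))).degree := by
        apply lt_of_le_of_lt (degree_le_natDegree)
        rw [degree_eq_natDegree (mul_ne_zero ht0 h1ne), hmul, h0.1]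
        exact_mod_cast hlt
      have hrec := trace_rec p m (k + 1)
      have hk : k + 1 + 2 = k + 3 := by omega
      rw [hk] at hrec
      constructor
      · rw [hrec, natDegree_sub_eq_left_of_natDegree_lt, hmul]
        rw [hmul, h0.1]; exact hlt
      · rw [hrec, leadingCoeff_sub_of_degree_lt hdlt, leadingCoeff_mul,
          t_leadingCoeff p m hm, h1.2]; ring

theorem trace_pow_degrees_distinct (p r m n : ℕ) (hp : p.Prime)
    (hr : 1 ≤ r) (hm : 1 ≤ m) (hn : 1 ≤ n) (hmn : m ≠ n) :
    (Matrix.trace (xm p m ^ r)).natDegree = 2 * r * m ∧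
    (Matrix.trace (xm p n ^ r)).natDegree = 2 * r * n ∧
    ∀ c : ZMod p, c ≠ 0 → Matrix.trace (xm p m ^ r) ≠ C c * Matrix.trace (xm p n ^ r) := by
  haveI : Fact p.Prime := ⟨hp⟩
  have km := key p m hm r hr
  have kn := key p n hn r hr
  refine ⟨km.1, kn.1, fun c hc h => ?_⟩
  have hd := congrArg Polynomial.natDegree h
  rw [km.1, natDegree_C_mul hc, kn.1] at hd
  exact hmn (Nat.eq_of_mul_eq_mul_left (by omega) hd)
end
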